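/- The fusion-pMOM density on ℝ^p defined by p(θ | σ²) = C_p (∏_{j=1}^p θ_j²)(∏_{j=2}^p (θ_j - θ_{j-1})²) (2πσ²)^{-p/2} σ^{-2p - 2(p-1)} exp(-θᵀθ/(2σ²)), with C_p = 2√15/((3+√15)^p - (3-√15)^p), integrates to 1 when σ² = 1. Equivalently, ∫_{ℝ^p} (∏_{j=1}^p θ_j²)(∏_{j=2}^p (θ_j - θ_{j-1})²) (2π)^{-p/2} exp(-‖θ‖²/2) dθ = 1/C_p = ((3+√15)^p - (3-√15)^p)/(2√15). -/

import Mathlib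

/-!
Write the integrand as `W(θ) ∏ φ(θⱼ)` with `φ` the standard normal density and
`W(θ) = ∏ θⱼ² ∏ (θⱼ - θⱼ₋₁)²`. Integrating out the last coordinate `x` with its neighbour `a`
fixed only involves Gaussian moments: `∫ x^(2m+2) (x - a)² φ(x) dx = (2m+3)‼ + (2m+1)‼ a²`.
Hence `Aₚ = E[W]` and `Bₚ = E[W θₚ²]` satisfy `Aₚ₊₁ = 3 Aₚ + Bₚ`, `Bₚ₊₁ = 15 Aₚ + 3 Bₚ`,
with `(A₁, B₁) = (1, 3)`. The matrix `[[3, 1], [15, 3]]` has eigenvalues `3 ± √15` with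
eigenvectors `(1, ± √15)`, which gives `Aₚ = ((3 + √15)^p - (3 - √15)^p) / (2√15)`.
-/

open MeasureTheory Real ProbabilityTheory
open scoped Nat ENNReal

namespace ProbabilityTheory

lemma gaussianPDFReal_zero_one (x : ℝ) :
    gaussianPDFReal 0 1 x = (2 * π) ^ (-(1 : ℝ) / 2) * exp (-(1 / 2) * x ^ 2) := by
  rw [gaussianPDFReal, NNReal.coe_one, mul_one, sqrt_eq_rpow, ← rpow_neg (by positivity)]
  congr 2 <;> ring

lemma gaussianPDFReal_zero_one_neg (x : ℝ) :
    gaussianPDFReal 0 1 (-x) = gaussianPDFReal 0 1 x := by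
  simp [gaussianPDFReal]

lemma hasDerivAt_gaussianPDFReal_zero_one (x : ℝ) :
    HasDerivAt (gaussianPDFReal 0 1) (-x * gaussianPDFReal 0 1 x) x := by
  simp_rw [funext gaussianPDFReal_zero_one]
  exact ((((hasDerivAt_pow 2 x).const_mul (-(1 / 2 : ℝ))).exp).const_mul _).congr_deriv
    (by push_cast; ring)

lemma prod_gaussianPDFReal_zero_one {ι : Type*} [Fintype ι] (θ : ι → ℝ) :
    ∏ i, gaussianPDFReal 0 1 (θ i) =
      (2 * π) ^ (-(Fintype.card ι : ℝ) / 2) * exp (-(∑ i, θ i ^ 2) / 2) := by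
  simp only [gaussianPDFReal_zero_one, Finset.prod_mul_distrib, Finset.prod_const,
    Finset.card_univ, ← exp_sum]
  rw [← rpow_natCast, ← rpow_mul (by positivity), ← Finset.mul_sum]
  congr 2 <;> ring

lemma integrable_pow_mul_gaussianPDFReal (k : ℕ) :
    Integrable fun x ↦ x ^ k * gaussianPDFReal 0 1 x := by
  have h := (integrable_rpow_mul_exp_neg_mul_sq (b := 1 / 2) (by norm_num)
    (neg_one_lt_zero.trans_le k.cast_nonneg)).const_mul ((2 * π) ^ (-(1 : ℝ) / 2))
  refine h.congr (.of_forall fun x ↦ ?_)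
  simp only [rpow_natCast, gaussianPDFReal_zero_one]
  ring

lemma integral_pow_add_two_mul_gaussianPDFReal (k : ℕ) :
    ∫ x, x ^ (k + 2) * gaussianPDFReal 0 1 x = (k + 1) * ∫ x, x ^ k * gaussianPDFReal 0 1 x := by
  have := integral_mul_deriv_eq_deriv_mul_of_integrable
    (u := fun x ↦ x ^ (k + 1)) (u' := fun x ↦ (k + 1 : ℝ) * x ^ k)
    (fun x _ ↦ by simpa using hasDerivAt_pow (k + 1) x)
    (fun x _ ↦ hasDerivAt_gaussianPDFReal_zero_one x) ?_ ?_ ?_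
  · simp only [neg_mul, mul_neg, integral_neg, neg_inj, ← mul_assoc, ← pow_succ] at this
    simpa only [mul_assoc, integral_const_mul] using this
  · simpa only [Pi.mul_def, mul_neg, neg_mul, ← mul_assoc, ← pow_succ] using
      (integrable_pow_mul_gaussianPDFReal (k + 2)).fun_neg
  · simpa only [Pi.mul_def, mul_assoc] using (integrable_pow_mul_gaussianPDFReal k).const_mul _
  · exact integrable_pow_mul_gaussianPDFReal (k + 1)

lemma integral_odd_pow_mul_gaussianPDFReal (k : ℕ) :
    ∫ x, x ^ (2 * k + 1) * gaussianPDFReal 0 1 x = 0 := by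
  have h := integral_neg_eq_self (fun x ↦ x ^ (2 * k + 1) * gaussianPDFReal 0 1 x) volume
  simp only [(Odd.neg_pow ⟨k, rfl⟩), gaussianPDFReal_zero_one_neg, neg_mul, integral_neg] at h
  linarith

lemma integral_even_pow_mul_gaussianPDFReal (k : ℕ) :
    ∫ x, x ^ (2 * k) * gaussianPDFReal 0 1 x = (2 * k - 1)‼ := by
  induction k with
  | zero => simp [integral_gaussianPDFReal_eq_one]
  | succ k ih =>
    rw [mul_add_one, integral_pow_add_two_mul_gaussianPDFReal, ih,
      show 2 * k + 2 - 1 = 2 * k + 1 by omega, Nat.doubleFactorial_add_one]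
    push_cast
    ring

lemma integrable_pow_mul_sub_sq_mul_gaussianPDFReal (k : ℕ) (a : ℝ) :
    Integrable fun x ↦ x ^ k * (x - a) ^ 2 * gaussianPDFReal 0 1 x := by
  have h := (((integrable_pow_mul_gaussianPDFReal (k + 2)).sub
    ((integrable_pow_mul_gaussianPDFReal (k + 1)).const_mul (2 * a))).add
    ((integrable_pow_mul_gaussianPDFReal k).const_mul (a ^ 2)))
  exact h.congr (.of_forall fun x ↦ by simp only [Pi.add_apply, Pi.sub_apply]; ring)

lemma integral_even_pow_mul_sub_sq_mul_gaussianPDFReal (m : ℕ) (a : ℝ) :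
    ∫ x, x ^ (2 * (m + 1)) * (x - a) ^ 2 * gaussianPDFReal 0 1 x =
      (2 * m + 3)‼ + (2 * m + 1)‼ * a ^ 2 := by
  have h_expand : (fun x ↦ x ^ (2 * (m + 1)) * (x - a) ^ 2 * gaussianPDFReal 0 1 x) = fun x ↦
      x ^ (2 * (m + 2)) * gaussianPDFReal 0 1 x
        - 2 * a * (x ^ (2 * (m + 1) + 1) * gaussianPDFReal 0 1 x)
        + a ^ 2 * (x ^ (2 * (m + 1)) * gaussianPDFReal 0 1 x) := by
    ext x; ring
  have hI := integrable_pow_mul_gaussianPDFReal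
  rw [h_expand, integral_add ((hI _).sub' ((hI _).const_mul _)) ((hI _).const_mul _),
    integral_sub (hI _) ((hI _).const_mul _), integral_const_mul, integral_const_mul,
    integral_even_pow_mul_gaussianPDFReal, integral_odd_pow_mul_gaussianPDFReal,
    integral_even_pow_mul_gaussianPDFReal, show 2 * (m + 2) - 1 = 2 * m + 3 by omega,
    show 2 * (m + 1) - 1 = 2 * m + 1 by omega]
  ring

end ProbabilityTheory

namespace MeasureTheory

lemma lintegral_eq_lintegral_snoc {α : Type*} [MeasureSpace α] [SigmaFinite (volume : Measure α)]
    {n : ℕ} {f : (Fin (n + 1) → α) → ℝ≥0∞} (hf : Measurable f) :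
    ∫⁻ θ, f θ = ∫⁻ y, ∫⁻ x, f (Fin.snoc y x) := by
  have e := (volume_preserving_piFinSuccAbove (fun _ : Fin (n + 1) ↦ α) (Fin.last n)).symm
  rw [← e.lintegral_comp hf, Measure.volume_eq_prod,
    lintegral_prod_symm' (fun z ↦ f _) (hf.comp (MeasurableEquiv.measurable _))]
  simp [Fin.snocEquiv]

end MeasureTheory

noncomputable def fusionDensity (n : ℕ) (θ : Fin (n + 1) → ℝ) : ℝ :=
  (∏ j, θ j ^ 2) * (∏ j : Fin n, (θ j.succ - θ j.castSucc) ^ 2) *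
    ∏ j, gaussianPDFReal 0 1 (θ j)

@[fun_prop]
lemma measurable_fusionDensity (n : ℕ) : Measurable (fusionDensity n) := by
  unfold fusionDensity
  fun_prop

lemma fusionDensity_nonneg (n : ℕ) (θ : Fin (n + 1) → ℝ) : 0 ≤ fusionDensity n θ :=
  mul_nonneg (by positivity) (Finset.prod_nonneg fun j _ ↦ gaussianPDFReal_nonneg 0 1 (θ j))

lemma fusionDensity_snoc (n : ℕ) (y : Fin (n + 1) → ℝ) (x : ℝ) :
    fusionDensity (n + 1) (Fin.snoc y x) =
      fusionDensity n y * (x ^ 2 * (x - y (Fin.last n)) ^ 2 * gaussianPDFReal 0 1 x) := by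
  simp only [fusionDensity, Fin.prod_univ_castSucc, Fin.succ_castSucc, Fin.succ_last,
    Fin.snoc_castSucc, Fin.snoc_last]
  ring

/-- A lower integral, so that Tonelli applies without any integrability on `ℝⁿ⁺¹`. -/
noncomputable def fusionMoment (n m : ℕ) : ℝ≥0∞ :=
  ∫⁻ θ, ENNReal.ofReal (fusionDensity n θ * θ (Fin.last n) ^ (2 * m))

lemma fusionMoment_zero (m : ℕ) : fusionMoment 0 m = (2 * m + 1)‼ := by
  have h_eq (x : ℝ) :
      x ^ 2 * gaussianPDFReal 0 1 x * x ^ (2 * m) = x ^ (2 * (m + 1)) * gaussianPDFReal 0 1 x := by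
    ring
  rw [fusionMoment, lintegral_eq_lintegral_snoc (by fun_prop), lintegral_unique]
  simp only [fusionDensity, Fin.snoc_zero, Fin.prod_const, zero_add, pow_one,
    Finset.univ_eq_empty, Finset.prod_empty, mul_one, volume_pi, Measure.pi_univ, h_eq]
  rw [← ofReal_integral_eq_lintegral_ofReal (integrable_pow_mul_gaussianPDFReal _)
    (.of_forall fun x ↦ mul_nonneg ((even_two_mul _).pow_nonneg x) (gaussianPDFReal_nonneg 0 1 x)),
    integral_even_pow_mul_gaussianPDFReal, show 2 * (m + 1) - 1 = 2 * m + 1 by omega,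
    ENNReal.ofReal_natCast]

lemma fusionMoment_succ (n m : ℕ) :
    fusionMoment (n + 1) m =
      (2 * m + 3)‼ * fusionMoment n 0 + (2 * m + 1)‼ * fusionMoment n 1 := by
  have h_snoc (y : Fin (n + 1) → ℝ) (x : ℝ) :
      fusionDensity (n + 1) (Fin.snoc y x) *
          (Fin.snoc y x : Fin (n + 2) → ℝ) (Fin.last _) ^ (2 * m) =
        fusionDensity n y *
          (x ^ (2 * (m + 1)) * (x - y (Fin.last n)) ^ 2 * gaussianPDFReal 0 1 x) := by
    rw [fusionDensity_snoc, Fin.snoc_last]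
    ring
  have h_inner (y : Fin (n + 1) → ℝ) :
      ∫⁻ x, ENNReal.ofReal (fusionDensity n y *
          (x ^ (2 * (m + 1)) * (x - y (Fin.last n)) ^ 2 * gaussianPDFReal 0 1 x)) =
        (2 * m + 3)‼ * ENNReal.ofReal (fusionDensity n y * y (Fin.last n) ^ (2 * 0)) +
          (2 * m + 1)‼ * ENNReal.ofReal (fusionDensity n y * y (Fin.last n) ^ (2 * 1)) := by
    simp only [ENNReal.ofReal_mul (fusionDensity_nonneg n y)]
    rw [lintegral_const_mul _ (by fun_prop), ← ofReal_integral_eq_lintegral_ofReal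
      (integrable_pow_mul_sub_sq_mul_gaussianPDFReal _ _) (.of_forall fun x ↦ ?_),
      integral_even_pow_mul_sub_sq_mul_gaussianPDFReal]
    · rw [ENNReal.ofReal_add (by positivity) (by positivity), ENNReal.ofReal_mul (by positivity),
        ENNReal.ofReal_natCast, ENNReal.ofReal_natCast]
      simp only [mul_zero, mul_one, pow_zero, ENNReal.ofReal_one]
      ring
    · exact mul_nonneg (mul_nonneg ((even_two_mul _).pow_nonneg x) (sq_nonneg _))
        (gaussianPDFReal_nonneg 0 1 x)
  rw [fusionMoment, lintegral_eq_lintegral_snoc (by fun_prop)]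
  simp only [h_snoc, h_inner]
  rw [lintegral_add_left (by fun_prop), lintegral_const_mul _ (by fun_prop),
    lintegral_const_mul _ (by fun_prop)]
  rfl

def fusionMomentPair : ℕ → ℕ × ℕ
  | 0 => (1, 3)
  | n + 1 => (3 * (fusionMomentPair n).1 + (fusionMomentPair n).2,
      15 * (fusionMomentPair n).1 + 3 * (fusionMomentPair n).2)

lemma fusionMoment_eq_fusionMomentPair (n : ℕ) :
    fusionMoment n 0 = (fusionMomentPair n).1 ∧ fusionMoment n 1 = (fusionMomentPair n).2 := by
  induction n with
  | zero => simp [fusionMoment_zero, fusionMomentPair, Nat.doubleFactorial]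
  | succ n ih =>
    simp only [fusionMoment_succ, ih.1, ih.2, fusionMomentPair]
    norm_num [Nat.doubleFactorial]

lemma fusionMomentPair_fst_pos (n : ℕ) : 0 < (fusionMomentPair n).1 := by
  induction n with
  | zero => simp [fusionMomentPair]
  | succ n ih => simp only [fusionMomentPair]; omega

lemma fusionMomentPair_eq_binet (n : ℕ) :
    2 * √15 * (fusionMomentPair n).1 = (3 + √15) ^ (n + 1) - (3 - √15) ^ (n + 1) ∧
      2 * (fusionMomentPair n).2 = (3 + √15) ^ (n + 1) + (3 - √15) ^ (n + 1) := by
  have h15 : √15 ^ 2 = 15 := sq_sqrt (by norm_num)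
  induction n with
  | zero => simp only [fusionMomentPair]; push_cast; constructor <;> ring
  | succ n ih =>
    simp only [fusionMomentPair, pow_succ _ (n + 1)]
    push_cast
    constructor
    · linear_combination 3 * ih.1 + √15 * ih.2
    · linear_combination √15 * ih.1 + 3 * ih.2 - 2 * ((fusionMomentPair n).1 : ℝ) * h15

lemma integral_fusionDensity (n : ℕ) : ∫ θ, fusionDensity n θ = (fusionMomentPair n).1 := by
  have h := (fusionMoment_eq_fusionMomentPair n).1
  simp only [fusionMoment, mul_zero, pow_zero, mul_one] at h
  rw [integral_eq_lintegral_of_nonneg_ae (.of_forall (fusionDensity_nonneg n))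
    (by fun_prop), h, ENNReal.toReal_natCast]

/-- With σ² = 1, the fusion-pMOM density integrates to 1: the Gaussian moment
∫_{ℝ^p} (∏ θ_j²)(∏ (θ_j - θ_{j-1})²)(2π)^{-p/2} exp(-‖θ‖²/2) dθ equals
1/C_p = ((3+√15)^p - (3-√15)^p)/(2√15), where p = n+1 ≥ 1. -/
theorem fusion_pMOM_integrates_to_one (n : ℕ) :
    (∫ θ : Fin (n + 1) → ℝ,
        ((∏ j, (θ j) ^ 2) * ∏ j : Fin n, (θ j.succ - θ j.castSucc) ^ 2) *
          ((2 * π) ^ (-((n : ℝ) + 1) / 2) * Real.exp (-(∑ j, (θ j) ^ 2) / 2))) =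
      ((3 + Real.sqrt 15) ^ (n + 1) - (3 - Real.sqrt 15) ^ (n + 1)) /
        (2 * Real.sqrt 15) ∧
    (2 * Real.sqrt 15 /
        ((3 + Real.sqrt 15) ^ (n + 1) - (3 - Real.sqrt 15) ^ (n + 1))) *
      (∫ θ : Fin (n + 1) → ℝ,
        ((∏ j, (θ j) ^ 2) * ∏ j : Fin n, (θ j.succ - θ j.castSucc) ^ 2) *
          ((2 * π) ^ (-((n : ℝ) + 1) / 2) * Real.exp (-(∑ j, (θ j) ^ 2) / 2))) = 1 := by
  have h_density (θ : Fin (n + 1) → ℝ) :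
      ((∏ j, θ j ^ 2) * ∏ j : Fin n, (θ j.succ - θ j.castSucc) ^ 2) *
          ((2 * π) ^ (-((n : ℝ) + 1) / 2) * exp (-(∑ j, θ j ^ 2) / 2)) = fusionDensity n θ := by
    rw [fusionDensity, prod_gaussianPDFReal_zero_one, Fintype.card_fin, Nat.cast_succ]
  have h_pos : (0 : ℝ) < (fusionMomentPair n).1 := mod_cast fusionMomentPair_fst_pos n
  have h_sqrt : (0 : ℝ) < √15 := by positivity
  simp_rw [h_density, integral_fusionDensity, ← (fusionMomentPair_eq_binet n).1]
  constructor <;> field_simp
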